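/- Let f₁, …, f_m : X → (-∞, +∞] be proper lower semicontinuous convex functions on a real Banach space X with ⋂ᵢ dom fᵢ ≠ ∅. If (∑ᵢ fᵢ)* = f₁* □ ⋯ □ f_m* on X*, then for every x ∈ X and ε ≥ 0, ∂_ε(f₁+⋯+f_m)(x) equals the intersection over η > 0 of the unions, over ε₁,…,ε_m ≥ 0 with ∑ᵢ εᵢ = ε + η, of ∂_{ε₁}f₁(x) + ⋯ + ∂_{ε_m}f_m(x). -/

import Mathlib

open Pointwise Topology Set

noncomputable section

variable {X : Type*} [NormedAddCommGroup X] [NormedSpace ℝ X]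

/-- `f` is proper: never `-∞` and finite somewhere. -/
def EProper (f : X → EReal) : Prop := (∀ x, f x ≠ ⊥) ∧ ∃ x, f x ≠ ⊤

/-- effective domain of `f`. -/
def edom (f : X → EReal) : Set X := {x | f x < ⊤}

/-- convexity for extended-real-valued functions. -/
def EConvex (f : X → EReal) : Prop :=
  ∀ x y : X, ∀ t : ℝ, 0 ≤ t → t ≤ 1 →
    f (t • x + (1 - t) • y) ≤ (t : EReal) * f x + ((1 - t : ℝ) : EReal) * f y

/-- the ε-subdifferential of `f` at `x`, a subset of the weak* dual. -/
def epsSubdiff (f : X → EReal) (ε : ℝ) (x : X) : Set (WeakDual ℝ X) :=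
  {p | f x ≠ ⊤ ∧ f x ≠ ⊥ ∧ ∀ y : X, (p (y - x) : EReal) + f x ≤ f y + (ε : EReal)}

/-- the (exact) subdifferential of `f` at `x`. -/
def subdiff (f : X → EReal) (x : X) : Set (WeakDual ℝ X) := epsSubdiff f 0 x

/-- the Fenchel conjugate of `f`. -/
def fconj (f : X → EReal) (p : WeakDual ℝ X) : EReal := ⨆ x : X, (p x : EReal) - f x

/-- the infimal convolution of finitely many functions on the dual. -/
def infConv {m : ℕ} (g : Fin m → WeakDual ℝ X → EReal) (p : WeakDual ℝ X) : EReal :=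
  ⨅ (y : Fin m → WeakDual ℝ X) (_ : ∑ i, y i = p), ∑ i, g i (y i)

/-- exactness (attainment) of the infimal convolution at `p`. -/
def infConvExactAt {m : ℕ} (g : Fin m → WeakDual ℝ X → EReal) (p : WeakDual ℝ X) : Prop :=
  ∃ y : Fin m → WeakDual ℝ X, ∑ i, y i = p ∧ infConv g p = ∑ i, g i (y i)

/-- the epigraph of the Fenchel conjugate of `f`, in `X* × ℝ`. -/
def epiConj (f : X → EReal) : Set ((WeakDual ℝ X) × ℝ) :=
  {q | fconj f q.1 ≤ (q.2 : EReal)}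

/-!
When `f x` is finite, `p ∈ ∂_ε f(x)` says exactly that the Fenchel–Young gap
`f* p + f x - p x ≥ 0` is at most `ε`. Under `(∑ fᵢ)* = □ fᵢ*`, the gap of `∑ fᵢ` at `p` is the
infimum, over decompositions `p = ∑ yᵢ`, of the sums of the gaps of the `fᵢ` at `yᵢ`. So the gap
is at most `ε` iff for every `η > 0` some decomposition has gaps summing to less than `ε + η`;
the slack is then added to one index to reach `ε + η` exactly. The reverse inclusion follows
from `∑ ∂_{εᵢ} fᵢ(x) ⊆ ∂_{∑ εᵢ}(∑ fᵢ)(x)` and `∂_ε f(x) = ⋂_{η > 0} ∂_{ε + η} f(x)`.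
-/

theorem EReal.coe_finset_sum {ι : Type*} (s : Finset ι) (g : ι → ℝ) :
    ((∑ i ∈ s, g i : ℝ) : EReal) = ∑ i ∈ s, (g i : EReal) :=
  map_sum (⟨⟨Real.toEReal, EReal.coe_zero⟩, EReal.coe_add⟩ : ℝ →+ EReal) g s

theorem EReal.exists_coe_of_sum_ne_bot_of_sum_ne_top {ι : Type*} [Fintype ι] {c : ι → EReal}
    (hbot : ∑ i, c i ≠ ⊥) (htop : ∑ i, c i ≠ ⊤) : ∃ a : ι → ℝ, ∀ i, c i = a i := by
  classical
  -- in `EReal`, `⊥ + ⊤ = ⊥`, so a sum avoids `⊥` only if every term does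
  have hbot' i : c i ≠ ⊥ := fun hi => hbot (WithBot.sum_eq_bot_iff.2 ⟨i, Finset.mem_univ i, hi⟩)
  refine ⟨fun i => (c i).toReal, fun i => (EReal.coe_toReal (fun hi => htop ?_) (hbot' i)).symm⟩
  rw [← Finset.add_sum_erase _ _ (Finset.mem_univ i), hi, EReal.top_add_of_ne_bot]
  intro hrest
  obtain ⟨j, -, hj⟩ := WithBot.sum_eq_bot_iff.1 hrest
  exact hbot' j hj

theorem Fintype.exists_le_sum_eq {ι : Type*} [Fintype ι] [Nonempty ι] {e : ι → ℝ} {c : ℝ}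
    (h : ∑ i, e i ≤ c) : ∃ e' : ι → ℝ, e ≤ e' ∧ ∑ i, e' i = c := by
  classical
  obtain ⟨i₀⟩ := ‹Nonempty ι›
  refine ⟨e + Pi.single i₀ (c - ∑ i, e i), fun i => ?_, ?_⟩
  · simp only [Pi.add_apply, le_add_iff_nonneg_right]
    by_cases hi : i = i₀
    · subst hi; simpa using h
    · simp [hi]
  · simp [Finset.sum_add_distrib]

theorem WeakDual.finset_sum_apply {ι : Type*} (s : Finset ι) (y : ι → WeakDual ℝ X) (x : X) :
    (∑ i ∈ s, y i) x = ∑ i ∈ s, y i x :=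
  map_sum (ContinuousLinearMap.apply ℝ ℝ x) y s

theorem sub_le_fconj (f : X → EReal) (p : WeakDual ℝ X) (x : X) :
    (p x : EReal) - f x ≤ fconj f p :=
  le_iSup (fun y => (p y : EReal) - f y) x

theorem mem_epsSubdiff_iff_fconj_le {f : X → EReal} {x : X} {a : ℝ} (hx : f x = a)
    {ε : ℝ} {p : WeakDual ℝ X} :
    p ∈ epsSubdiff f ε x ↔ fconj f p ≤ ((p x + ε - a : ℝ) : EReal) := by
  simp only [epsSubdiff, fconj, hx, mem_ofPred_eq, EReal.coe_ne_top, EReal.coe_ne_bot,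
    ne_eq, not_false_eq_true, true_and, iSup_le_iff]
  refine forall_congr' fun y => ?_
  induction f y with
  | bot =>
    simp only [EReal.bot_add, le_bot_iff, EReal.sub_bot (EReal.coe_ne_bot _), top_le_iff,
      ← EReal.coe_add, EReal.coe_ne_bot, EReal.coe_ne_top]
  | top => simp
  | coe b =>
    norm_cast
    rw [map_sub]
    constructor <;> intro h <;> linarith

theorem mem_epsSubdiff_of_fconj_eq {f : X → EReal} {x : X} {a r : ℝ} (hx : f x = a)
    {q : WeakDual ℝ X} (hq : fconj f q = r) :
    q ∈ epsSubdiff f (r + a - q x) x ∧ 0 ≤ r + a - q x := by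
  refine ⟨(mem_epsSubdiff_iff_fconj_le hx).2 (by rw [hq]; norm_cast; linarith), ?_⟩
  have := sub_le_fconj f q x
  rw [hx, hq] at this
  norm_cast at this
  linarith

theorem epsSubdiff_mono {f : X → EReal} {x : X} {ε ε' : ℝ} (h : ε ≤ ε') :
    epsSubdiff f ε x ⊆ epsSubdiff f ε' x := by
  rintro p ⟨hx_top, hx_bot, hp⟩
  exact ⟨hx_top, hx_bot, fun y => (hp y).trans (by gcongr)⟩

theorem mem_epsSubdiff_of_forall_pos {f : X → EReal} {x : X} {ε : ℝ} {p : WeakDual ℝ X}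
    (h : ∀ η > 0, p ∈ epsSubdiff f (ε + η) x) : p ∈ epsSubdiff f ε x := by
  obtain ⟨hx_top, hx_bot, -⟩ := h 1 one_pos
  lift f x to ℝ using ⟨hx_top, hx_bot⟩ with a hx
  rw [mem_epsSubdiff_iff_fconj_le hx.symm]
  refine EReal.le_of_forall_lt_iff_le.1 fun z hz => ?_
  have hη : 0 < z - (p x + ε - a) := sub_pos.2 (EReal.coe_lt_coe_iff.1 hz)
  have := (mem_epsSubdiff_iff_fconj_le hx.symm).1 (h _ hη)
  convert this using 3
  ring

theorem sum_epsSubdiff_subset {ι : Type*} [Fintype ι] (f : ι → X → EReal) (e : ι → ℝ) (x : X) :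
    ∑ i, epsSubdiff (f i) (e i) x ⊆ epsSubdiff (fun y => ∑ i, f i y) (∑ i, e i) x := by
  intro p hp
  obtain ⟨y, hy, rfl⟩ := (Set.mem_fintype_sum _ _).1 hp
  have ha i : f i x = (f i x).toReal := (EReal.coe_toReal (hy i).1 (hy i).2.1).symm
  have hsum : ∑ i, f i x = ((∑ i, (f i x).toReal : ℝ) : EReal) := by
    rw [EReal.coe_finset_sum]; exact Finset.sum_congr rfl fun i _ => ha i
  refine ⟨by simp [hsum], by simp [hsum], fun z => ?_⟩
  calc ((∑ i, y i) (z - x) : EReal) + ∑ i, f i x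
      = ∑ i, ((y i (z - x) : EReal) + f i x) := by
        rw [WeakDual.finset_sum_apply, EReal.coe_finset_sum, Finset.sum_add_distrib]
    _ ≤ ∑ i, (f i z + e i) := Finset.sum_le_sum fun i _ => (hy i).2.2 z
    _ = ∑ i, f i z + ((∑ i, e i : ℝ) : EReal) := by
        rw [Finset.sum_add_distrib, EReal.coe_finset_sum]

theorem mem_iUnion_sum_epsSubdiff_of_mem_epsSubdiff_sum {m : ℕ} [NeZero m]
    {f : Fin m → X → EReal} {x : X} {ε η : ℝ} (hη : 0 < η) {p : WeakDual ℝ X}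
    (hconj : infConv (fun i => fconj (f i)) p ≤ fconj (fun y => ∑ i, f i y) p)
    (hp : p ∈ epsSubdiff (fun y => ∑ i, f i y) ε x) :
    p ∈ ⋃ (e : Fin m → ℝ) (_ : (∀ i, 0 ≤ e i) ∧ ∑ i, e i = ε + η),
      ∑ i, epsSubdiff (f i) (e i) x := by
  obtain ⟨a, ha⟩ := EReal.exists_coe_of_sum_ne_bot_of_sum_ne_top hp.2.1 hp.1
  have hsum : ∑ i, f i x = ((∑ i, a i : ℝ) : EReal) := by simp only [ha, EReal.coe_finset_sum]
  have hlt : infConv (fun i => fconj (f i)) p < ((p x + (ε + η) - ∑ i, a i : ℝ) : EReal) :=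
    calc infConv (fun i => fconj (f i)) p
        ≤ ((p x + ε - ∑ i, a i : ℝ) : EReal) :=
          hconj.trans ((mem_epsSubdiff_iff_fconj_le (f := fun y => ∑ i, f i y) hsum).1 hp)
      _ < ((p x + (ε + η) - ∑ i, a i : ℝ) : EReal) := EReal.coe_lt_coe_iff.2 (by linarith)
  simp only [infConv, iInf_lt_iff] at hlt
  obtain ⟨y, rfl, hy⟩ := hlt
  have hbot : ∑ i, fconj (f i) (y i) ≠ ⊥ := by
    refine ne_bot_of_le_ne_bot ?_ (Finset.sum_le_sum fun i _ => sub_le_fconj (f i) (y i) x)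
    simp only [ha, ← EReal.coe_sub, ← EReal.coe_finset_sum, EReal.coe_ne_bot, ne_eq,
      not_false_eq_true]
  obtain ⟨r, hr⟩ := EReal.exists_coe_of_sum_ne_bot_of_sum_ne_top hbot hy.ne_top
  have hgap i := mem_epsSubdiff_of_fconj_eq (ha i) (hr i)
  have hgap_sum : ∑ i, (r i + a i - y i x) ≤ ε + η := by
    simp only [hr, ← EReal.coe_finset_sum, EReal.coe_lt_coe_iff] at hy
    rw [Finset.sum_sub_distrib, Finset.sum_add_distrib, ← WeakDual.finset_sum_apply]
    linarith
  obtain ⟨e, hle, he⟩ := Fintype.exists_le_sum_eq hgap_sum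
  exact mem_iUnion₂.2 ⟨e, ⟨fun i => (hgap i).2.trans (hle i), he⟩,
    (Set.mem_fintype_sum _ _).2 ⟨y, fun i => epsSubdiff_mono (hle i) (hgap i).1, rfl⟩⟩

theorem stmt4_general {X : Type*} [NormedAddCommGroup X] [NormedSpace ℝ X]
    {m : ℕ} (hm : 1 ≤ m) (f : Fin m → X → EReal)
    (heq : ∀ p : WeakDual ℝ X,
      fconj (fun x => ∑ i, f i x) p = infConv (fun i => fconj (f i)) p) :
    ∀ (x : X) (ε : ℝ), 0 ≤ ε →
      epsSubdiff (fun y => ∑ i, f i y) ε x =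
        ⋂ η ∈ Set.Ioi (0 : ℝ),
          ⋃ (e : Fin m → ℝ) (_ : (∀ i, 0 ≤ e i) ∧ ∑ i, e i = ε + η),
            ∑ i, epsSubdiff (f i) (e i) x := by
  intro x ε _
  have : NeZero m := ⟨by omega⟩
  ext p
  simp only [mem_iInter, mem_Ioi]
  constructor
  · exact fun hp η hη => mem_iUnion_sum_epsSubdiff_of_mem_epsSubdiff_sum hη (heq p).ge hp
  · refine fun h => mem_epsSubdiff_of_forall_pos fun η hη => ?_
    obtain ⟨e, ⟨-, he⟩, hpe⟩ := mem_iUnion₂.1 (h η hη)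
    exact he ▸ sum_epsSubdiff_subset f e x hpe

theorem stmt4 {X : Type*} [NormedAddCommGroup X] [NormedSpace ℝ X] [CompleteSpace X]
    {m : ℕ} (hm : 1 ≤ m) (f : Fin m → X → EReal)
    (hp : ∀ i, EProper (f i)) (hl : ∀ i, LowerSemicontinuous (f i)) (hc : ∀ i, EConvex (f i))
    (hdom : (⋂ i, edom (f i)).Nonempty)
    (heq : ∀ p : WeakDual ℝ X,
      fconj (fun x => ∑ i, f i x) p = infConv (fun i => fconj (f i)) p) :
    ∀ (x : X) (ε : ℝ), 0 ≤ ε →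
      epsSubdiff (fun y => ∑ i, f i y) ε x =
        ⋂ η ∈ Set.Ioi (0 : ℝ),
          ⋃ (e : Fin m → ℝ) (_ : (∀ i, 0 ≤ e i) ∧ ∑ i, e i = ε + η),
            ∑ i, epsSubdiff (f i) (e i) x :=
  stmt4_general hm f heq
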